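/- Let T be a bounded linear operator on a complex Hilbert space H and N an algebra norm on B(H). Then dw_N(T) ≥ (1/2) sqrt( (1/2) N(T² + (T*)²) + w_N(T)² + 2 N(|T|)⁴ + (d₁ + d₂) + 2|m₁ − m₂| ), where m₁ = max{N(Re T)² + N(|T|)⁴, w_N(T)²}, m₂ = max{N(Im T)², N(|T|)⁴}, d₁ = |N(Re T)² + N(|T|)⁴ − w_N(T)²|, d₂ = |N(Im T)² − N(|T|)⁴|. -/

import Mathlib

open ContinuousLinearMap Complex

variable {H : Type*} [NormedAddCommGroup H] [InnerProductSpace ℂ H] [CompleteSpace H]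

/-- Real part of an operator: `Re(A) = (A + A*)/2`. -/
noncomputable def reOp (A : H →L[ℂ] H) : H →L[ℂ] H := (2 : ℂ)⁻¹ • (A + adjoint A)

/-- Imaginary part of an operator: `Im(A) = (A - A*)/(2i)`. -/
noncomputable def imOp (A : H →L[ℂ] H) : H →L[ℂ] H := (2 * I)⁻¹ • (A - adjoint A)

/-- Modulus of an operator: `|A| = (A* A)^{1/2}`. -/
noncomputable def absOp (A : H →L[ℂ] H) : H →L[ℂ] H := CFC.sqrt (adjoint A * A)

/-- Generalized numerical radius. -/
noncomputable def wN (N : (H →L[ℂ] H) → ℝ) (T : H →L[ℂ] H) : ℝ :=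
  ⨆ θ : ℝ, N (reOp (Complex.exp (θ * I) • T))

/-- Generalized Davis–Wielandt radius. -/
noncomputable def dwN (N : (H →L[ℂ] H) → ℝ) (T : H →L[ℂ] H) : ℝ :=
  ⨆ θ : ℝ, Real.sqrt ((N (reOp (Complex.exp (θ * I) • T))) ^ 2
    + (N (reOp (Complex.exp (θ * I) • absOp T))) ^ 4)

/-!
Evaluating the supremum defining `dw_N(T)` at `θ = 0` and `θ = -π/2` gives
`N(Re T)² + N(|T|)⁴ ≤ dw_N(T)²` and `N(Im T)² ≤ dw_N(T)²`, and trivially `w_N(T) ≤ dw_N(T)`.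
From `T² + T*² = 2((Re T)² - (Im T)²)` and submultiplicativity,
`½ N(T² + T*²) ≤ N(Re T)² + N(Im T)²`. With `x + y + |x - y| = 2 max x y` the expression under
the square root is then at most `2 m₁ + 2 m₂ + 2 |m₁ - m₂| = 4 max m₁ m₂ ≤ 4 dw_N(T)²`.
-/

lemma isSelfAdjoint_absOp (A : H →L[ℂ] H) : IsSelfAdjoint (absOp A) :=
  IsSelfAdjoint.of_nonneg (CFC.sqrt_nonneg _)

lemma reOp_eq_self {A : H →L[ℂ] H} (hA : IsSelfAdjoint A) : reOp A = A := by
  rw [reOp, ← star_eq_adjoint, hA.star_eq, ← two_smul ℂ, smul_smul]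
  norm_num

lemma reOp_smul (c : ℂ) (A : H →L[ℂ] H) :
    reOp (c • A) = (2 : ℂ)⁻¹ • (c • A + (starRingEnd ℂ c) • adjoint A) := by
  rw [reOp, ← star_eq_adjoint (c • A), star_smul, star_eq_adjoint]
  rfl

lemma reOp_neg_I_smul (A : H →L[ℂ] H) : reOp ((-I) • A) = imOp A := by
  rw [reOp_smul, imOp, map_neg, conj_I, neg_neg]
  match_scalars <;> field_simp <;> ring_nf <;> simp [Complex.I_sq]

lemma sq_add_adjoint_sq (T : H →L[ℂ] H) :
    T ^ 2 + adjoint T ^ 2 = (2 : ℂ) • (reOp T * reOp T - imOp T * imOp T) := by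
  simp only [reOp, imOp, pow_two, smul_mul_smul_comm, mul_sub, sub_mul, mul_add, add_mul,
    smul_sub, smul_add]
  match_scalars <;> field_simp <;> ring_nf <;> simp [Complex.I_sq] <;> norm_num

lemma two_mul_max_eq_add_add_abs_sub (x y : ℝ) : 2 * max x y = x + y + |x - y| := by
  rcases le_total x y with h | h
  · rw [abs_of_nonpos (by linarith), max_eq_right h]; ring
  · rw [abs_of_nonneg (by linarith), max_eq_left h]; ring

section Seminorm

variable (p : Seminorm ℂ (H →L[ℂ] H))

lemma seminorm_reOp_exp_smul_le (A : H →L[ℂ] H) (θ : ℝ) :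
    p (reOp (exp (θ * I) • A)) ≤ (p A + p (adjoint A)) / 2 := by
  rw [reOp_smul, map_smul_eq_mul, norm_inv, Complex.norm_ofNat, inv_mul_eq_div]
  gcongr
  refine (map_add_le_add p _ _).trans_eq ?_
  rw [map_smul_eq_mul, map_smul_eq_mul, RCLike.norm_conj, norm_exp_ofReal_mul_I, one_mul, one_mul]

lemma seminorm_sq_add_adjoint_sq_le (hmul : ∀ A B : H →L[ℂ] H, p (A * B) ≤ p A * p B)
    (T : H →L[ℂ] H) :
    p (T ^ 2 + adjoint T ^ 2) ≤ 2 * (p (reOp T) ^ 2 + p (imOp T) ^ 2) := by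
  rw [sq_add_adjoint_sq, map_smul_eq_mul, Complex.norm_ofNat, pow_two, pow_two]
  gcongr
  exact (map_sub_le_add p _ _).trans (add_le_add (hmul _ _) (hmul _ _))

lemma bddAbove_range_dwN (T : H →L[ℂ] H) :
    BddAbove (Set.range fun θ : ℝ => Real.sqrt ((p (reOp (exp (θ * I) • T))) ^ 2
      + (p (reOp (exp (θ * I) • absOp T))) ^ 4)) := by
  refine ⟨Real.sqrt (((p T + p (adjoint T)) / 2) ^ 2 + p (absOp T) ^ 4), ?_⟩
  rintro _ ⟨θ, rfl⟩
  have hre := seminorm_reOp_exp_smul_le p T θ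
  have habs := seminorm_reOp_exp_smul_le p (absOp T) θ
  rw [← star_eq_adjoint, (isSelfAdjoint_absOp T).star_eq, add_self_div_two] at habs
  exact Real.sqrt_le_sqrt (add_le_add (pow_le_pow_left₀ (apply_nonneg p _) hre 2)
    (pow_le_pow_left₀ (apply_nonneg p _) habs 4))

lemma sqrt_le_dwN (T : H →L[ℂ] H) (θ : ℝ) :
    Real.sqrt ((p (reOp (exp (θ * I) • T))) ^ 2 + (p (reOp (exp (θ * I) • absOp T))) ^ 4)
      ≤ dwN p T :=
  le_ciSup (bddAbove_range_dwN p T) θ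

lemma seminorm_reOp_exp_smul_le_dwN (T : H →L[ℂ] H) (θ : ℝ) :
    p (reOp (exp (θ * I) • T)) ≤ dwN p T :=
  (Real.le_sqrt_of_sq_le (le_add_of_nonneg_right (by positivity))).trans (sqrt_le_dwN p T θ)

lemma wN_le_dwN (T : H →L[ℂ] H) : wN p T ≤ dwN p T :=
  ciSup_le (seminorm_reOp_exp_smul_le_dwN p T)

lemma seminorm_reOp_le_wN (T : H →L[ℂ] H) : p (reOp T) ≤ wN p T := by
  have hbdd : BddAbove (Set.range fun θ : ℝ => p (reOp (exp (θ * I) • T))) :=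
    ⟨_, Set.forall_mem_range.2 (seminorm_reOp_exp_smul_le p T)⟩
  unfold wN
  simpa using le_ciSup hbdd 0

lemma seminorm_imOp_le_dwN (T : H →L[ℂ] H) : p (imOp T) ≤ dwN p T := by
  have h := seminorm_reOp_exp_smul_le_dwN p T (-Real.pi / 2)
  rwa [ofReal_div, ofReal_neg, ofReal_ofNat, exp_neg_pi_div_two_mul_I, reOp_neg_I_smul] at h

lemma seminorm_reOp_sq_add_absOp_pow_four_le_dwN_sq (T : H →L[ℂ] H) :
    p (reOp T) ^ 2 + p (absOp T) ^ 4 ≤ dwN p T ^ 2 := by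
  have h := sqrt_le_dwN p T 0
  rw [ofReal_zero, zero_mul, exp_zero, one_smul, one_smul, reOp_eq_self (isSelfAdjoint_absOp T),
    Real.sqrt_le_iff] at h
  exact h.2

end Seminorm

theorem stmt_13_general (N : (H →L[ℂ] H) → ℝ) (T : H →L[ℂ] H)
    (hNadd : ∀ A B : H →L[ℂ] H, N (A + B) ≤ N A + N B)
    (hNsmul : ∀ (c : ℂ) (A : H →L[ℂ] H), N (c • A) = ‖c‖ * N A)
    (hNmul : ∀ A B : H →L[ℂ] H, N (A * B) ≤ N A * N B)
    (m₁ m₂ d₁ d₂ : ℝ)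
    (hm₁ : m₁ = max ((N (reOp T)) ^ 2 + (N (absOp T)) ^ 4) ((wN N T) ^ 2))
    (hm₂ : m₂ = max ((N (imOp T)) ^ 2) ((N (absOp T)) ^ 4))
    (hd₁ : d₁ = |(N (reOp T)) ^ 2 + (N (absOp T)) ^ 4 - (wN N T) ^ 2|)
    (hd₂ : d₂ = |(N (imOp T)) ^ 2 - (N (absOp T)) ^ 4|) :
    dwN N T ≥ (1 / 2) * Real.sqrt ((1 / 2) * N (T ^ 2 + (adjoint T) ^ 2)
      + (wN N T) ^ 2 + 2 * (N (absOp T)) ^ 4 + (d₁ + d₂) + 2 * |m₁ - m₂|) := by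
  obtain ⟨p, rfl⟩ : ∃ p : Seminorm ℂ (H →L[ℂ] H), ⇑p = N :=
    ⟨Seminorm.of N hNadd hNsmul, rfl⟩
  set D := dwN p T
  have hRe := seminorm_reOp_sq_add_absOp_pow_four_le_dwN_sq p T
  have hIm := pow_le_pow_left₀ (apply_nonneg p _) (seminorm_imOp_le_dwN p T) 2
  have hw := pow_le_pow_left₀ ((apply_nonneg p _).trans (seminorm_reOp_le_wN p T))
    (wN_le_dwN p T) 2
  have hsq := seminorm_sq_add_adjoint_sq_le p hNmul T
  have hmax : max m₁ m₂ ≤ D ^ 2 := by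
    rw [hm₁, hm₂]
    exact max_le (max_le hRe hw)
      (max_le hIm ((le_add_of_nonneg_left (sq_nonneg _)).trans hRe))
  have h₁ := two_mul_max_eq_add_add_abs_sub (p (reOp T) ^ 2 + p (absOp T) ^ 4) (wN p T ^ 2)
  have h₂ := two_mul_max_eq_add_add_abs_sub (p (imOp T) ^ 2) (p (absOp T) ^ 4)
  have h₃ := two_mul_max_eq_add_add_abs_sub m₁ m₂
  have hD : 0 ≤ D := (Real.sqrt_nonneg _).trans (sqrt_le_dwN p T 0)
  rw [ge_iff_le, one_div_mul_eq_div, div_le_iff₀' two_pos, Real.sqrt_le_left (by positivity)]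
  subst hm₁ hm₂ hd₁ hd₂
  linarith

theorem stmt_13 (N : (H →L[ℂ] H) → ℝ) (T : H →L[ℂ] H)
    (hN0 : ∀ A : H →L[ℂ] H, 0 ≤ N A)
    (hNeq : ∀ A : H →L[ℂ] H, N A = 0 → A = 0)
    (hNadd : ∀ A B : H →L[ℂ] H, N (A + B) ≤ N A + N B)
    (hNsmul : ∀ (c : ℂ) (A : H →L[ℂ] H), N (c • A) = ‖c‖ * N A)
    (hNmul : ∀ A B : H →L[ℂ] H, N (A * B) ≤ N A * N B)
    (m₁ m₂ d₁ d₂ : ℝ)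
    (hm₁ : m₁ = max ((N (reOp T)) ^ 2 + (N (absOp T)) ^ 4) ((wN N T) ^ 2))
    (hm₂ : m₂ = max ((N (imOp T)) ^ 2) ((N (absOp T)) ^ 4))
    (hd₁ : d₁ = |(N (reOp T)) ^ 2 + (N (absOp T)) ^ 4 - (wN N T) ^ 2|)
    (hd₂ : d₂ = |(N (imOp T)) ^ 2 - (N (absOp T)) ^ 4|) :
    dwN N T ≥ (1 / 2) * Real.sqrt ((1 / 2) * N (T ^ 2 + (adjoint T) ^ 2)
      + (wN N T) ^ 2 + 2 * (N (absOp T)) ^ 4 + (d₁ + d₂) + 2 * |m₁ - m₂|) :=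
  stmt_13_general N T hNadd hNsmul hNmul m₁ m₂ d₁ d₂ hm₁ hm₂ hd₁ hd₂
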